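/- For any finite nonempty sets A, B of integers, |A + B|² ≥ |A + A| · |B|. -/
import Mathlib

open Finset Pointwise

theorem stmt_5 (A B : Finset ℤ) (hA : A.Nonempty) (hB : B.Nonempty) :
    (A + A).card * B.card ≤ (A + B).card ^ 2 := by
  have h := Finset.ruzsa_triangle_inequality_add_add_add A B A
  rwa [add_comm B A, ← sq] at h
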